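/- In the 3×3 marriage market of Knuth's Example 1, there exist eight pairwise distinct matchings μ_1, μ_2, …, μ_8 with μ_1 matching m1–w1, m2–w2, m3–w3, such that for every i ∈ {1,…,8} (indices taken cyclically, so μ_9 = μ_1) the matching μ_{i+1} is obtained from μ_i by satisfying a blocking pair of μ_i, and none of μ_1, …, μ_8 is stable. Hence a deterministic decentralized process of satisfying blocking pairs can cycle forever without reaching a stable matching. -/

import Mathlib

namespace Marriage

/-- A marriage market: disjoint sets of men `M` and women `W`, each man `m` with a strict
(linear) preference order on `W ∪ {m}` (encoded as `Option W`, where `none` stands for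
staying single, i.e. being matched to himself), and likewise for women. -/
structure Market (M W : Type*) where
  prefM : M → Option W → Option W → Prop
  prefW : W → Option M → Option M → Prop
  prefM_sto : ∀ m, IsStrictTotalOrder (Option W) (prefM m)
  prefW_sto : ∀ w, IsStrictTotalOrder (Option M) (prefW w)

/-- A matching: `f m = some w` iff `m` is matched to `w` iff `g w = some m`;
`f m = none` (resp. `g w = none`) means the player is unmatched (matched to themself). -/
structure Matching (M W : Type*) where
  f : M → Option W
  g : W → Option M
  consistent : ∀ m w, f m = some w ↔ g w = some m

variable {M W : Type*}

/-- `(m, w)` is a blocking pair of `μ`. -/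
def IsBlocking (E : Market M W) (μ : Matching M W) (m : M) (w : W) : Prop :=
  μ.f m ≠ some w ∧ E.prefM m (some w) (μ.f m) ∧ E.prefW w (some m) (μ.g w)

/-- `μ` is individually rational: no player strictly prefers being single to their match. -/
def IndivRational (E : Market M W) (μ : Matching M W) : Prop :=
  (∀ m, ¬ E.prefM m none (μ.f m)) ∧ (∀ w, ¬ E.prefW w none (μ.g w))

/-- `μ` is stable: individually rational and without blocking pairs. -/
def IsStable (E : Market M W) (μ : Matching M W) : Prop :=
  IndivRational E μ ∧ ∀ m w, ¬ IsBlocking E μ m w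

/-- `μ'` is obtained from `μ` by satisfying the pair `(m, w)`: `m` and `w` get matched to
each other, their former partners (if any) become unmatched, everyone else keeps their
partner. -/
def Satisfies (μ μ' : Matching M W) (m : M) (w : W) : Prop :=
  μ'.f m = some w ∧ μ'.g w = some m ∧
  (∀ m', m' ≠ m → μ.f m' = some w → μ'.f m' = none) ∧
  (∀ m', m' ≠ m → μ.f m' ≠ some w → μ'.f m' = μ.f m') ∧
  (∀ w', w' ≠ w → μ.g w' = some m → μ'.g w' = none) ∧
  (∀ w', w' ≠ w → μ.g w' ≠ some m → μ'.g w' = μ.g w')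

/-- A blocking pair `(m, w)` of `μ` that is optimal for the man `m`. -/
def OptimalForM (E : Market M W) (μ : Matching M W) (m : M) (w : W) : Prop :=
  IsBlocking E μ m w ∧
  ∀ w', IsBlocking E μ m w' → w' ≠ w → E.prefM m (some w) (some w')

/-- A blocking pair `(m, w)` of `μ` that is optimal for the woman `w`. -/
def OptimalForW (E : Market M W) (μ : Matching M W) (m : M) (w : W) : Prop :=
  IsBlocking E μ m w ∧
  ∀ m', IsBlocking E μ m' w → m' ≠ m → E.prefW w (some m) (some m')

/-- A mutually optimal blocking pair of `μ`. -/
def MutuallyOptimal (E : Market M W) (μ : Matching M W) (m : M) (w : W) : Prop :=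
  OptimalForM E μ m w ∧ OptimalForW E μ m w


/-- Rank (lower = better) on `Option (Fin n)` induced by a rank matrix, with being
unmatched (`none`) strictly worse than any partner. -/
def optRank {n : ℕ} (r : Fin n → Fin n → ℕ) (i : Fin n) : Option (Fin n) → ℕ
  | none => n
  | some j => r i j

/-- Build a market on `Fin n × Fin n` from rank matrices (lower rank = more preferred). -/
def mkMarket {n : ℕ} (rM rW : Fin n → Fin n → ℕ)
    (hM : ∀ (i : Fin n) (a b : Option (Fin n)),
      optRank rM i a < optRank rM i b ∨ a = b ∨ optRank rM i b < optRank rM i a)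
    (hW : ∀ (i : Fin n) (a b : Option (Fin n)),
      optRank rW i a < optRank rW i b ∨ a = b ∨ optRank rW i b < optRank rW i a) :
    Market (Fin n) (Fin n) where
  prefM m a b := optRank rM m a < optRank rM m b
  prefW w a b := optRank rW w a < optRank rW w b
  prefM_sto m :=
    { trichotomous := fun a b h1 h2 => ((hM m a b).resolve_left h1).resolve_right h2
      irrefl := fun _ => lt_irrefl _
      trans := fun _ _ _ h1 h2 => lt_trans h1 h2 }
  prefW_sto w :=
    { trichotomous := fun a b h1 h2 => ((hW w a b).resolve_left h1).resolve_right h2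
      irrefl := fun _ => lt_irrefl _
      trans := fun _ _ _ h1 h2 => lt_trans h1 h2 }

/-- Rank matrix for the men of Knuth's Example 1. -/
def KnuthM : Fin 3 → Fin 3 → ℕ := ![![1,0,2], ![0,2,1], ![0,1,2]]

/-- Rank matrix for the women of Knuth's Example 1. -/
def KnuthW : Fin 3 → Fin 3 → ℕ := ![![0,2,1], ![1,2,0], ![0,2,1]]

/-- The 3×3 marriage market of Knuth's Example 1. -/
def Knuth : Market (Fin 3) (Fin 3) := mkMarket KnuthM KnuthW (by decide) (by decide)

/-- The matching μ₁ of Knuth's Example 1: m1–w1, m2–w2, m3–w3. -/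
def Knuthmu1 : Matching (Fin 3) (Fin 3) :=
  ⟨![some 0, some 1, some 2], ![some 0, some 1, some 2], by decide⟩

theorem Matching.f_injective :
    Function.Injective (Matching.f : Matching M W → M → Option W) := by
  rintro ⟨f, g, hfg⟩ ⟨f', g', hfg'⟩ (rfl : f = f')
  obtain rfl : g = g' := funext fun w => Option.ext fun m => (hfg m w).symm.trans (hfg' m w)
  rfl

theorem not_isStable_of_isBlocking {E : Market M W} {μ : Matching M W} {m : M} {w : W}
    (h : IsBlocking E μ m w) : ¬ IsStable E μ :=
  fun hμ => hμ.2 m w h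

section Decidable

variable [DecidableEq W]

instance (E : Market M W) [∀ m, DecidableRel (E.prefM m)] [∀ w, DecidableRel (E.prefW w)]
    (μ : Matching M W) (m : M) (w : W) : Decidable (IsBlocking E μ m w) := by
  unfold IsBlocking; infer_instance

instance [Fintype M] [Fintype W] [DecidableEq M] (μ μ' : Matching M W) (m : M) (w : W) :
    Decidable (Satisfies μ μ' m w) := by
  unfold Satisfies; infer_instance

end Decidable

instance (m : Fin 3) : DecidableRel (Knuth.prefM m) :=
  fun a b => inferInstanceAs (Decidable (optRank KnuthM m a < optRank KnuthM m b))

instance (w : Fin 3) : DecidableRel (Knuth.prefW w) :=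
  fun a b => inferInstanceAs (Decidable (optRank KnuthW w a < optRank KnuthW w b))

/-- Knuth's cycle μ₁, …, μ₈, with men and women numbered from `0`. -/
def knuthCycle : Fin 8 → Matching (Fin 3) (Fin 3) :=
  ![Knuthmu1,
    ⟨![some 1, none, some 2], ![none, some 0, some 2], by decide⟩,
    ⟨![some 1, some 0, some 2], ![some 1, some 0, some 2], by decide⟩,
    ⟨![none, some 0, some 1], ![some 1, some 2, none], by decide⟩,
    ⟨![some 2, some 0, some 1], ![some 1, some 2, some 0], by decide⟩,
    ⟨![some 2, none, some 0], ![some 2, none, some 0], by decide⟩,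
    ⟨![some 0, none, none], ![some 0, none, none], by decide⟩,
    ⟨![some 0, some 1, none], ![some 0, some 1, none], by decide⟩]

/-- The blocking pair `(m, w)` of `knuthCycle i` whose satisfaction gives `knuthCycle (i + 1)`. -/
def knuthCyclePair : Fin 8 → Fin 3 × Fin 3 :=
  ![(0, 1), (1, 0), (2, 1), (0, 2), (2, 0), (0, 0), (1, 1), (2, 2)]

theorem knuthCycle_injective : Function.Injective knuthCycle :=
  Function.Injective.of_comp (f := Matching.f) (by decide)

theorem knuthCycle_step (i : Fin 8) :
    IsBlocking Knuth (knuthCycle i) (knuthCyclePair i).1 (knuthCyclePair i).2 ∧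
      Satisfies (knuthCycle i) (knuthCycle (i + 1)) (knuthCyclePair i).1 (knuthCyclePair i).2 := by
  revert i; decide

/-- In Knuth's 3×3 market, there are eight pairwise distinct matchings, starting with
m1–w1, m2–w2, m3–w3, such that each next one (cyclically) is obtained from the previous
by satisfying a blocking pair, and none of them is stable. -/
theorem knuth_cycle :
    ∃ seq : Fin 8 → Matching (Fin 3) (Fin 3),
      Function.Injective seq ∧
      seq 0 = Knuthmu1 ∧
      (∀ i : Fin 8, ∃ m w,
        IsBlocking Knuth (seq i) m w ∧ Satisfies (seq i) (seq (i + 1)) m w) ∧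
      (∀ i : Fin 8, ¬ IsStable Knuth (seq i)) :=
  ⟨knuthCycle, knuthCycle_injective, rfl, fun i => ⟨_, _, knuthCycle_step i⟩,
    fun i => not_isStable_of_isBlocking (knuthCycle_step i).1⟩

end Marriage
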